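/- In dimension d = 2, the l₁-norm measure T₁(ρ) = ∑_{i,j}|ρ_{ij} - 1/2| satisfies T₁(|f*⟩⟨f*|) = (3+√3)/2 > 2 = T₁(|f₂⟩⟨f₂|), where |f₂⟩ = (|0⟩-|1⟩)/√2 is the maximal-texture Fourier state and |f*⟩ = (√3/2)|0⟩ - (1/2)|1⟩; hence T₁ can increase under a free operation mapping |f₂⟩ to |f*⟩ and violates monotonicity. -/

import Mathlib

open Matrix BigOperators Finset ComplexOrder

noncomputable section

abbrev Mat (d : ℕ) := Matrix (Fin d) (Fin d) ℂ

def IsDensity {d : ℕ} (ρ : Mat d) : Prop := ρ.PosSemidef ∧ ρ.trace = 1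

def outer {d : ℕ} (ψ : Fin d → ℂ) : Mat d := Matrix.vecMulVec ψ (star ψ)

def f1vec (d : ℕ) : Fin d → ℂ := fun _ => ((Real.sqrt d)⁻¹ : ℝ)

def f1 (d : ℕ) : Mat d := outer (f1vec d)

noncomputable def traceNorm {d : ℕ} (A : Mat d) : ℝ :=
  ((Matrix.posSemidef_conjTranspose_mul_self A).1.eigenvectorUnitary.1 *
    diagonal ((fun x : ℝ => (x : ℂ)) ∘ (√·) ∘ (Matrix.posSemidef_conjTranspose_mul_self A).1.eigenvalues) *
    (star (Matrix.posSemidef_conjTranspose_mul_self A).1.eigenvectorUnitary : Mat d)).trace.re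

noncomputable def Ttr {d : ℕ} (ρ : Mat d) : ℝ := (1/2) * traceNorm (ρ - f1 d)

noncomputable def fidF1 {d : ℕ} (ρ : Mat d) : ℝ := (star (f1vec d) ⬝ᵥ (ρ *ᵥ f1vec d)).re

noncomputable def TF {d : ℕ} (ρ : Mat d) : ℝ := 1 - fidF1 ρ

noncomputable def TB {d : ℕ} (ρ : Mat d) : ℝ := 2 * (1 - Real.sqrt (fidF1 ρ))

noncomputable def T1 (ρ : Mat 2) : ℝ := ∑ i, ∑ j, ‖ρ i j - (f1 2) i j‖

noncomputable def f2vec : Fin 2 → ℂ := ![((Real.sqrt 2)⁻¹ : ℝ), (-(Real.sqrt 2)⁻¹ : ℝ)]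

noncomputable def fstarvec : Fin 2 → ℂ := ![((Real.sqrt 3 / 2 : ℝ)), ((-(1/2) : ℝ))]

/-! In ℂ², f₁ and f₂ form an orthonormal basis, so the Kraus operators |f₁⟩⟨f₁| and |f*⟩⟨f₂|
define a channel that fixes f₁ and sends f₂ to f*. For a real pure state (a, b) the measure is
T₁ = |a² - ½| + 2|ab - ½| + |b² - ½|, which is 2 at f₂ and (3 + √3)/2 at f*. -/

section RedirectChannel

variable {d : ℕ} {u v w : Fin d → ℂ}

def redirectKraus (u v w : Fin d → ℂ) : Fin 2 → Mat d := ![outer u, vecMulVec w (star v)]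

lemma sum_conjTranspose_mul_redirectKraus (hu : star u ⬝ᵥ u = 1) (hw : star w ⬝ᵥ w = 1) :
    ∑ i, (redirectKraus u v w i)ᴴ * redirectKraus u v w i = outer u + outer v := by
  simp [redirectKraus, outer, Fin.sum_univ_two, vecMulVec_mul_vecMulVec, hu, hw]

lemma sum_redirectKraus_outer_left (hu : star u ⬝ᵥ u = 1) (huv : star u ⬝ᵥ v = 0) :
    ∑ i, redirectKraus u v w i * outer u * (redirectKraus u v w i)ᴴ = outer u := by
  have hvu : star v ⬝ᵥ u = 0 := by rw [star_dotProduct, huv, star_zero]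
  simp [redirectKraus, outer, Fin.sum_univ_two, vecMulVec_mul_vecMulVec, hu, hvu]

lemma sum_redirectKraus_outer_right (hv : star v ⬝ᵥ v = 1) (huv : star u ⬝ᵥ v = 0) :
    ∑ i, redirectKraus u v w i * outer v * (redirectKraus u v w i)ᴴ = outer w := by
  simp [redirectKraus, outer, Fin.sum_univ_two, vecMulVec_mul_vecMulVec, hv, huv]

end RedirectChannel

lemma star_vecTwo_dotProduct (a b c e : ℝ) :
    star ![(a : ℂ), b] ⬝ᵥ ![(c : ℂ), e] = ((a * c + b * e : ℝ) : ℂ) := by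
  simp [dotProduct, Fin.sum_univ_two]

lemma f1vec_two : f1vec 2 = ![(((√2)⁻¹ : ℝ) : ℂ), ((√2)⁻¹ : ℝ)] := by
  ext i; fin_cases i <;> simp [f1vec]

lemma inv_sqrt_two_mul_self : (√2)⁻¹ * (√2)⁻¹ = (1 / 2 : ℝ) := by
  rw [← mul_inv, Real.mul_self_sqrt zero_le_two, one_div]

lemma sqrt_three_mul_self : √3 * √3 = 3 := Real.mul_self_sqrt (by norm_num)

lemma outer_vecTwo_ofReal (a b : ℝ) :
    outer ![(a : ℂ), b] = !![((a * a : ℝ) : ℂ), ((a * b : ℝ) : ℂ); ((b * a : ℝ) : ℂ), ((b * b : ℝ) : ℂ)] := by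
  ext i j
  fin_cases i <;> fin_cases j <;> simp [outer]

lemma f1_two : f1 2 = !![((1 / 2 : ℝ) : ℂ), ((1 / 2 : ℝ) : ℂ); ((1 / 2 : ℝ) : ℂ), ((1 / 2 : ℝ) : ℂ)] := by
  rw [f1, f1vec_two, outer_vecTwo_ofReal, inv_sqrt_two_mul_self]

lemma T1_outer_ofReal (a b : ℝ) :
    T1 (outer ![(a : ℂ), b]) = |a * a - 1 / 2| + 2 * |a * b - 1 / 2| + |b * b - 1 / 2| := by
  simp only [T1, f1_two, outer_vecTwo_ofReal, Fin.sum_univ_two, of_apply, cons_val_zero,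
    cons_val_one, ← Complex.ofReal_sub, Complex.norm_real, Real.norm_eq_abs, mul_comm b a]
  ring

lemma T1_outer_fstarvec : T1 (outer fstarvec) = (3 + √3) / 2 := by
  rw [fstarvec, T1_outer_ofReal, abs_of_nonneg (by nlinarith [sqrt_three_mul_self]),
    abs_of_nonpos (by nlinarith [Real.sqrt_nonneg 3]), abs_of_nonpos (by norm_num)]
  nlinarith [sqrt_three_mul_self]

lemma T1_outer_f2vec : T1 (outer f2vec) = 2 := by
  rw [f2vec, T1_outer_ofReal, neg_mul, mul_neg, inv_sqrt_two_mul_self]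
  norm_num

lemma outer_f1vec_add_outer_f2vec : outer (f1vec 2) + outer f2vec = 1 := by
  rw [f1vec_two, f2vec, outer_vecTwo_ofReal, outer_vecTwo_ofReal, neg_mul, mul_neg, neg_mul_neg,
    inv_sqrt_two_mul_self]
  ext i j
  fin_cases i <;> fin_cases j <;> norm_num

theorem stmt16 :
    T1 (outer fstarvec) = (3 + Real.sqrt 3) / 2 ∧
    T1 (outer f2vec) = 2 ∧
    (3 + Real.sqrt 3) / 2 > 2 ∧
    ∃ (m : ℕ) (K : Fin m → Mat 2),
      (∑ i, (K i)ᴴ * K i = 1) ∧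
      (∑ i, K i * f1 2 * (K i)ᴴ = f1 2) ∧
      (∑ i, K i * outer f2vec * (K i)ᴴ = outer fstarvec) ∧
      T1 (∑ i, K i * outer f2vec * (K i)ᴴ) > T1 (outer f2vec) := by
  have hgt : (3 + √3) / 2 > 2 := by
    have : 1 < √3 := by rw [Real.lt_sqrt zero_le_one]; norm_num
    linarith
  have hf1 : star (f1vec 2) ⬝ᵥ f1vec 2 = 1 := by
    rw [f1vec_two, star_vecTwo_dotProduct, inv_sqrt_two_mul_self]; norm_num
  have hf2 : star f2vec ⬝ᵥ f2vec = 1 := by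
    rw [f2vec, star_vecTwo_dotProduct, neg_mul_neg, inv_sqrt_two_mul_self]; norm_num
  have hf12 : star (f1vec 2) ⬝ᵥ f2vec = 0 := by
    rw [f1vec_two, f2vec, star_vecTwo_dotProduct]; norm_num
  have hfstar : star fstarvec ⬝ᵥ fstarvec = 1 := by
    rw [fstarvec, star_vecTwo_dotProduct]; norm_num [div_mul_div_comm, sqrt_three_mul_self]
  have hmap := sum_redirectKraus_outer_right (w := fstarvec) hf2 hf12
  refine ⟨T1_outer_fstarvec, T1_outer_f2vec, hgt, 2, redirectKraus (f1vec 2) f2vec fstarvec,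
    ?_, sum_redirectKraus_outer_left hf1 hf12, hmap, ?_⟩
  · rw [sum_conjTranspose_mul_redirectKraus hf1 hfstar, outer_f1vec_add_outer_f2vec]
  · rwa [hmap, T1_outer_fstarvec, T1_outer_f2vec]
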